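/- arXiv:2402.12187 — 4 statements merged into one kernel-verified Lean document; each statement's English description precedes it below -/
import Mathlib

section
/- Let (𝒳, dist) be a metric space with N pairwise disjoint classes 𝒳^(1),…,𝒳^(N), and suppose the distribution is r-separated and R-clustered with r > R ≥ 0 (i.e., R-aligned). For each class i let 𝒳_train^(i) ⊆ 𝒳^(i) be a nonempty training set. Then for every test point x ∈ 𝒳^(y) and every class j ≠ y, the infimum distance from x to 𝒳_train^(y) is strictly less than the infimum distance from x to 𝒳_train^(j). Consequently the 1-nearest-neighbor classifier, which assigns to x the class i minimizing infDist(x, 𝒳_train^(i)), predicts the true class y for every point of the distribution, so it has accuracy 1 on the R-aligned distribution. -/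
open Metric

/-- On an `R`-aligned distribution (r-separated, R-clustered, r > R ≥ 0) with pairwise
disjoint classes and nonempty training sets, every test point is strictly closer (in
infimum distance) to the training set of its true class than to that of any other class;
hence the 1-nearest-neighbor classifier predicts the true class everywhere (accuracy 1). -/
theorem stmt_0 {α : Type*} [MetricSpace α] {N : ℕ}
    (Xc : Fin N → Set α) (train : Fin N → Set α) (r R : ℝ)
    (hdisj : ∀ i j : Fin N, i ≠ j → Disjoint (Xc i) (Xc j))
    (hsep : ∀ i j : Fin N, i ≠ j → ∀ x ∈ Xc i, ∀ x' ∈ Xc j, 2 * r ≤ dist x x')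
    (hclus : ∀ i : Fin N, ∀ x ∈ Xc i, ∀ x' ∈ Xc i, dist x x' ≤ 2 * R)
    (hrR : r > R) (hR : R ≥ 0)
    (htrain : ∀ i, train i ⊆ Xc i) (hne : ∀ i, (train i).Nonempty) :
    ∀ y : Fin N, ∀ x ∈ Xc y, ∀ j : Fin N, j ≠ y →
      infDist x (train y) < infDist x (train j) := by
  intro y x hx j hj
  obtain ⟨t, ht⟩ := hne y
  have h1 : infDist x (train y) ≤ 2 * R :=
    le_trans (infDist_le_dist_of_mem ht) (hclus y x hx t (htrain y ht))
  have h2 : 2 * r ≤ infDist x (train j) := by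
    by_contra h
    obtain ⟨z, hz, hzd⟩ := (infDist_lt_iff (hne j)).mp (not_le.mp h)
    exact absurd (hsep y j (Ne.symm hj) x hx z (htrain j hz)) (not_le.mpr hzd)
  linarith
end

section
/- Let (𝒳, dist) be a metric space with two disjoint classes 𝒳^(0) and 𝒳^(1) forming a distribution that is r-separated and R-clustered with r > R > 0, and let 𝒳_train^(0) ⊆ 𝒳^(0) and 𝒳_train^(1) ⊆ 𝒳^(1) be nonempty training sets. Define the binary 1-nearest-neighbor classifier f_1nn(x) = (1/(2R))·(infDist(x, 𝒳_train^(0)), infDist(x, 𝒳_train^(1))) and the prediction F_1nn(x) = argmin_i f_1nn(x)_i. Then for every x ∈ 𝒳^(0) one has f_1nn(x)_0 < f_1nn(x)_1, and for every x ∈ 𝒳^(1) one has f_1nn(x)_1 < f_1nn(x)_0; hence F_1nn(x) equals the true class of x for every x in the distribution. -/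
open Metric

/-- Binary 1-nearest-neighbor classifier on an r-separated, R-clustered two-class
distribution with r > R > 0: with `f_1nn(x) = (1/(2R))·(infDist(x,train₀), infDist(x,train₁))`,
for every `x` in class 0 the first coordinate is strictly smaller, and for every `x` in
class 1 the second coordinate is strictly smaller; hence the argmin prediction equals the
true class of every point. -/
theorem stmt_1 {α : Type*} [MetricSpace α]
    (X0 X1 train0 train1 : Set α) (r R : ℝ)
    (hdisj : Disjoint X0 X1)
    (hsep : ∀ x ∈ X0, ∀ x' ∈ X1, 2 * r ≤ dist x x')
    (hclus0 : ∀ x ∈ X0, ∀ x' ∈ X0, dist x x' ≤ 2 * R)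
    (hclus1 : ∀ x ∈ X1, ∀ x' ∈ X1, dist x x' ≤ 2 * R)
    (hrR : r > R) (hR : R > 0)
    (htrain0 : train0 ⊆ X0) (htrain1 : train1 ⊆ X1)
    (hne0 : train0.Nonempty) (hne1 : train1.Nonempty) :
    (∀ x ∈ X0, (1 / (2 * R)) * infDist x train0 < (1 / (2 * R)) * infDist x train1) ∧
    (∀ x ∈ X1, (1 / (2 * R)) * infDist x train1 < (1 / (2 * R)) * infDist x train0) := by
  have hpos : (0 : ℝ) < 1 / (2 * R) := by positivity
  constructor
  · intro x hx
    obtain ⟨y, hy⟩ := hne0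
    have h1 : infDist x train0 ≤ 2 * R :=
      le_trans (infDist_le_dist_of_mem hy) (hclus0 x hx y (htrain0 hy))
    have h2 : 2 * r ≤ infDist x train1 := by
      refine le_of_not_gt fun h => ?_
      obtain ⟨z, hz, hlt⟩ := (infDist_lt_iff hne1).mp h
      exact absurd (hsep x hx z (htrain1 hz)) (not_le.mpr hlt)
    have : infDist x train0 < infDist x train1 := by linarith
    exact mul_lt_mul_of_pos_left this hpos
  · intro x hx
    obtain ⟨y, hy⟩ := hne1
    have h1 : infDist x train1 ≤ 2 * R :=
      le_trans (infDist_le_dist_of_mem hy) (hclus1 x hx y (htrain1 hy))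
    have h2 : 2 * r ≤ infDist x train0 := by
      refine le_of_not_gt fun h => ?_
      obtain ⟨z, hz, hlt⟩ := (infDist_lt_iff hne0).mp h
      exact absurd (dist_comm x z ▸ hsep z (htrain0 hz) x hx) (not_le.mpr hlt)
    have : infDist x train1 < infDist x train0 := by linarith
    exact mul_lt_mul_of_pos_left this hpos
end

section
/- Let (𝒳, dist) be a metric space with N classes 𝒳^(1),…,𝒳^(N) and class centers c_1,…,c_N such that: (i) every class is contained in the closed ball of radius R about its center, 𝒳^(i) ⊆ B̄(c_i, R) (the distribution is R-clustered around the centers); (ii) for each i the nonempty training set 𝒳_train^(i) ⊆ 𝒳^(i) satisfies 𝒳_train^(i) ⊆ B̄(c_i, R') with R' ≤ R (the training samples are R'-clustered around the centers); and (iii) the centers of distinct classes satisfy dist(c_i, c_j) ≥ 2r + 2R for all i ≠ j (the classes are r-separated in the ball topology of Figure 1(c)). If r > R', then for every x ∈ 𝒳^(y) and every j ≠ y, infDist(x, 𝒳_train^(y)) < infDist(x, 𝒳_train^(j)); hence the 1-nearest-neighbor classifier assigning to x the class i minimizing infDist(x, 𝒳_train^(i)) has accuracy 1 on 𝒳. 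-/
open Metric

/-- Classes R-clustered around centers `c i`, training sets R'-clustered around the
centers with R' ≤ R, and centers of distinct classes at distance at least `2r + 2R`:
if `r > R'`, then every point of class `y` is strictly closer (in infimum distance) to
the training set of class `y` than to that of any other class `j ≠ y`; hence the
1-nearest-neighbor classifier has accuracy 1. -/
theorem stmt_6 {α : Type*} [MetricSpace α] {N : ℕ}
    (Xc : Fin N → Set α) (train : Fin N → Set α) (c : Fin N → α) (r R R' : ℝ)
    (hball : ∀ i, Xc i ⊆ closedBall (c i) R)
    (htrain : ∀ i, train i ⊆ Xc i) (hne : ∀ i, (train i).Nonempty)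
    (htrball : ∀ i, train i ⊆ closedBall (c i) R')
    (hR'R : R' ≤ R)
    (hcsep : ∀ i j : Fin N, i ≠ j → 2 * r + 2 * R ≤ dist (c i) (c j))
    (hr : r > R') :
    ∀ y : Fin N, ∀ x ∈ Xc y, ∀ j : Fin N, j ≠ y →
      infDist x (train y) < infDist x (train j) := by
  intro y x hx j hj
  have hxc : dist x (c y) ≤ R := mem_closedBall.mp (hball y hx)
  -- upper bound: infDist x (train y) ≤ R + R'
  obtain ⟨t, ht⟩ := hne y
  have hup : infDist x (train y) ≤ R + R' := by
    refine le_trans (infDist_le_dist_of_mem ht) ?_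
    calc dist x t ≤ dist x (c y) + dist (c y) t := dist_triangle _ _ _
    _ ≤ R + R' := by
        have := mem_closedBall.mp (htrball y ht)
        rw [dist_comm (c y) t] at *
        linarith
  have hlow : 2 * r + R - R' ≤ infDist x (train j) := by
    by_contra h
    push_neg at h
    obtain ⟨s, hs, hds⟩ := (infDist_lt_iff (hne j)).mp h
    have hsc : dist s (c j) ≤ R' := mem_closedBall.mp (htrball j hs)
    have hsep := hcsep y j hj.symm
    have h1 : dist (c y) (c j) ≤ dist (c y) x + dist x s + dist s (c j) := by
      calc dist (c y) (c j) ≤ dist (c y) s + dist s (c j) := dist_triangle _ _ _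
      _ ≤ dist (c y) x + dist x s + dist s (c j) := by
          have := dist_triangle (c y) x s
          linarith
    rw [dist_comm (c y) x] at h1
    linarith
  have := infDist_nonneg (x := x) (s := train j)
  linarith
end

section
/- Let (𝒳, dist) be a metric space with N classes 𝒳^(1),…,𝒳^(N) and centers c_1,…,c_N satisfying 𝒳^(i) ⊆ B̄(c_i, R) for all i and dist(c_i, c_j) ≥ 2r + 2R for all i ≠ j. Suppose each nonempty training set satisfies 𝒳_train^(i) ⊆ B̄(c_i, R') ∩ 𝒳^(i) with R' ≤ R and r > R'. Then for every x ∈ 𝒳^(y) and every j ≠ y, the margin of the 1-nearest-neighbor decision satisfies infDist(x, 𝒳_train^(j)) − infDist(x, 𝒳_train^(y)) ≥ 2r − 2R' > 0; i.e., clustering the training samples more tightly (smaller R') enlarges the guaranteed decision margin, and complete accuracy requires only r > R' rather than r > R. -/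
open Metric

/-- Classes contained in R-balls about their centers with centers of distinct classes at
distance at least `2r + 2R`, and nonempty training sets contained in the `R'`-balls about
the centers (within their classes), with `R' ≤ R` and `r > R'`: the margin of the
1-nearest-neighbor decision satisfies, for every point `x` of class `y` and every `j ≠ y`,
`infDist(x, train_j) − infDist(x, train_y) ≥ 2r − 2R' > 0`. -/
theorem stmt_11 {α : Type*} [MetricSpace α] {N : ℕ}
    (Xc : Fin N → Set α) (train : Fin N → Set α) (c : Fin N → α) (r R R' : ℝ)
    (hball : ∀ i, Xc i ⊆ closedBall (c i) R)
    (hcsep : ∀ i j : Fin N, i ≠ j → 2 * r + 2 * R ≤ dist (c i) (c j))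
    (hne : ∀ i, (train i).Nonempty)
    (htrain : ∀ i, train i ⊆ closedBall (c i) R' ∩ Xc i)
    (hR'R : R' ≤ R) (hr : r > R') :
    ∀ y : Fin N, ∀ x ∈ Xc y, ∀ j : Fin N, j ≠ y →
      2 * r - 2 * R' ≤ infDist x (train j) - infDist x (train y) ∧
      0 < 2 * r - 2 * R' := by
  intro y x hx j hj
  have hxc : dist x (c y) ≤ R := by
    have := hball y hx; simpa [mem_closedBall] using this
  -- upper bound on infDist x (train y)
  obtain ⟨t, ht⟩ := hne y
  have htc : dist t (c y) ≤ R' := by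
    have := (htrain y ht).1; simpa [mem_closedBall] using this
  have hupper : infDist x (train y) ≤ R + R' := by
    calc infDist x (train y) ≤ dist x t := infDist_le_dist_of_mem ht
      _ ≤ dist x (c y) + dist (c y) t := dist_triangle _ _ _
      _ ≤ R + R' := by rw [dist_comm (c y) t]; linarith
  -- lower bound on infDist x (train j)
  have hlower : 2 * r + R - R' ≤ infDist x (train j) := by
    by_contra h
    rw [not_le] at h
    obtain ⟨s, hs, hlt⟩ := (infDist_lt_iff (hne j)).mp h
    have hsc : dist s (c j) ≤ R' := by
      have := (htrain j hs).1; simpa [mem_closedBall] using this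
    have hsep : 2 * r + 2 * R ≤ dist (c j) (c y) := hcsep j y hj
    have h1 : dist (c j) (c y) ≤ dist (c j) s + dist s x + dist x (c y) :=
      dist_triangle4 _ _ _ _
    have : dist (c j) s ≤ R' := by rw [dist_comm]; exact hsc
    have : dist x s = dist s x := dist_comm x s
    linarith
  exact ⟨by linarith, by linarith⟩
end
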